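/- Non-spanned dimension reduction: Let s be a partial outmap of the n-hypercube and i a dimension such that all known vertices agree in coordinate i (i is non-spanned). Then s is completable to a USO if and only if the projected partial outmap s^{[n]∖{i}} on the (n−1)-hypercube (obtained by deleting coordinate i from vertices and outmap values of known vertices) is completable. -/

import Mathlib

/-- `s` is the outmap of a unique sink orientation (Szabó–Welzl criterion). -/
def IsUSO {ι : Type*} (s : (ι → Bool) → (ι → Bool)) : Prop :=
  ∀ u v : ι → Bool, u ≠ v → ∃ i, u i ≠ v i ∧ s u i ≠ s v i

/-- A partial outmap is completable if some USO outmap agrees with it on all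
known vertices. -/
def Completable {ι : Type*} (s : (ι → Bool) → Option (ι → Bool)) : Prop :=
  ∃ t : (ι → Bool) → (ι → Bool), IsUSO t ∧ ∀ u a, s u = some a → t u = a

open Classical in
/-- The projection of a partial outmap obtained by deleting coordinate `i`
from the vertices and outmap values of the known vertices. -/
noncomputable def projPO {ι : Type*} (s : (ι → Bool) → Option (ι → Bool)) (i : ι) :
    ({j : ι // j ≠ i} → Bool) → Option ({j : ι // j ≠ i} → Bool) :=
  fun w =>
    if h : ∃ u : ι → Bool, (∀ j : {j : ι // j ≠ i}, u j.1 = w j) ∧ (s u).isSome then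
      (s h.choose).map (fun a => fun j : {j : ι // j ≠ i} => a j.1)
    else none

/-!
Split every vertex as `(u i, w)` with `w` the vertex of the `(n-1)`-cube obtained by deleting
coordinate `i`. Since all known vertices lie in one facet `u i = b`, restricting a completing USO
to that facet completes the projection. Conversely, a USO `t` completing the projection is
duplicated on both facets and each `i`-edge is oriented as `s` prescribes at its endpoint in the
facet `b`; this is again a USO, because two vertices either differ outside `i`, where `t`
separates them, or form an `i`-edge, whose endpoints have opposite `i`-th outmap bits.
-/

section

variable {ι : Type*} {s : (ι → Bool) → Option (ι → Bool)} {i : ι}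

theorem funext_of_ne {β : Type*} {u v : ι → β} (hi : u i = v i)
    (h : ∀ j : {j // j ≠ i}, u j = v j) : u = v := by
  funext k
  by_cases hk : k = i
  · exact hk ▸ hi
  · exact h ⟨k, hk⟩

theorem exists_of_projPO_eq_some {w a : {j // j ≠ i} → Bool} (h : projPO s i w = some a) :
    ∃ u a', (fun j : {j // j ≠ i} => u j) = w ∧ s u = some a' ∧
      (fun j : {j // j ≠ i} => a' j) = a := by
  unfold projPO at h
  split_ifs at h with hex
  obtain ⟨hw, hknown⟩ := hex.choose_spec
  obtain ⟨a', ha'⟩ := Option.isSome_iff_exists.mp hknown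
  rw [ha', Option.map_some, Option.some_inj] at h
  exact ⟨hex.choose, a', funext hw, ha', h⟩

theorem projPO_restrict {b : Bool} (hb : ∀ u, (s u).isSome → u i = b) {u a : ι → Bool}
    (hu : s u = some a) :
    projPO s i (fun j : {j // j ≠ i} => u j) = some (fun j : {j // j ≠ i} => a j) := by
  have hex : ∃ u' : ι → Bool, (∀ j : {j // j ≠ i}, u' j = u j) ∧ (s u').isSome :=
    ⟨u, fun _ => rfl, by simp [hu]⟩
  obtain ⟨hres, hknown⟩ := hex.choose_spec
  have hchoose : hex.choose = u := funext_of_ne ((hb _ hknown).trans (hb u (by simp [hu])).symm) hres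
  rw [projPO, dif_pos hex, hchoose, hu, Option.map_some]

end

open Equiv

section

variable {ι : Type*} [DecidableEq ι] (i : ι)

theorem IsUSO.facet {t : (ι → Bool) → (ι → Bool)} (ht : IsUSO t) (b : Bool) :
    IsUSO fun w => (funSplitAt i Bool (t ((funSplitAt i Bool).symm (b, w)))).2 := by
  intro w w' hne
  have hlift : (b, w) ≠ (b, w') := by simpa using hne
  obtain ⟨k, hk, hkt⟩ := ht _ _ ((funSplitAt i Bool).symm.injective.ne hlift)
  have hki : k ≠ i := by
    rintro rfl
    simp at hk
  exact ⟨⟨k, hki⟩, by simpa [hki] using hk, hkt⟩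

/-- `t` on both `i`-facets; the `i`-edge above `w` points into its endpoint with `u i = c w`. -/
def combedOutmap (t : ({j // j ≠ i} → Bool) → ({j // j ≠ i} → Bool))
    (c : ({j // j ≠ i} → Bool) → Bool) (u : ι → Bool) : ι → Bool :=
  (funSplitAt i Bool).symm (xor (u i) (c (funSplitAt i Bool u).2), t (funSplitAt i Bool u).2)

theorem IsUSO.combedOutmap {t : ({j // j ≠ i} → Bool) → ({j // j ≠ i} → Bool)} (ht : IsUSO t)
    (c : ({j // j ≠ i} → Bool) → Bool) : IsUSO (combedOutmap i t c) := by
  intro u v hne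
  by_cases hres : (funSplitAt i Bool u).2 = (funSplitAt i Bool v).2
  · have hi : u i ≠ v i := fun h =>
      hne ((funSplitAt i Bool).injective (Prod.ext h hres))
    refine ⟨i, hi, ?_⟩
    simp only [_root_.combedOutmap, hres]
    simpa using hi
  · obtain ⟨j, hj, hjt⟩ := ht _ _ hres
    exact ⟨j, hj, by simpa [_root_.combedOutmap, j.2] using hjt⟩

end

section

variable {ι : Type*} [DecidableEq ι] {s : (ι → Bool) → Option (ι → Bool)} {i : ι} {b : Bool}

theorem eq_funSplitAt_symm {u : ι → Bool} (hu : u i = b) :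
    u = (funSplitAt i Bool).symm (b, fun j => u j) := by
  rw [Equiv.eq_symm_apply]
  simp [hu]

theorem Completable.projPO (hb : ∀ u, (s u).isSome → u i = b) (hs : Completable s) :
    Completable (_root_.projPO s i) := by
  obtain ⟨t, ht, hts⟩ := hs
  refine ⟨_, ht.facet i b, fun w a hwa => ?_⟩
  obtain ⟨u, a', rfl, hu, rfl⟩ := exists_of_projPO_eq_some hwa
  rw [← eq_funSplitAt_symm (hb u (by simp [hu])), hts u a' hu]
  rfl

theorem Completable.of_projPO (hb : ∀ u, (s u).isSome → u i = b)
    (hs : Completable (_root_.projPO s i)) : Completable s := by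
  obtain ⟨t, ht, hts⟩ := hs
  let c (w : {j // j ≠ i} → Bool) : Bool :=
    xor b ((s ((funSplitAt i Bool).symm (b, w))).elim false (· i))
  refine ⟨combedOutmap i t c, ht.combedOutmap i c, fun u a hu => ?_⟩
  have hub : u i = b := hb u (by simp [hu])
  have hc : c (fun j => u j) = xor b (a i) := by
    simp only [c, ← eq_funSplitAt_symm hub, hu, Option.elim_some]
  rw [combedOutmap, Equiv.symm_apply_eq]
  simpa [hc, hub] using hts _ _ (projPO_restrict hb hu)

end

theorem stmt19_general {ι : Type*} [DecidableEq ι]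
    (s : (ι → Bool) → Option (ι → Bool)) (i : ι)
    (hns : ∀ u v : ι → Bool, (s u).isSome → (s v).isSome → u i = v i) :
    Completable s ↔ Completable (projPO s i) := by
  obtain ⟨b, hb⟩ : ∃ b, ∀ u, (s u).isSome → u i = b := by
    by_cases hknown : ∃ v, (s v).isSome
    · obtain ⟨v, hv⟩ := hknown
      exact ⟨v i, fun u hu => hns u v hu hv⟩
    · exact ⟨false, fun u hu => (hknown ⟨u, hu⟩).elim⟩
  exact ⟨Completable.projPO hb, Completable.of_projPO hb⟩

/-- Non-spanned dimension reduction: if all known vertices of a partial outmap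
agree in coordinate `i`, then the partial outmap is completable iff its
projection away from coordinate `i` is completable. -/
theorem stmt19 {ι : Type*} [Fintype ι] [DecidableEq ι]
    (s : (ι → Bool) → Option (ι → Bool)) (i : ι)
    (hns : ∀ u v : ι → Bool, (s u).isSome → (s v).isSome → u i = v i) :
    Completable s ↔ Completable (projPO s i) :=
  stmt19_general s i hns
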